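/- arXiv:1210.4710 — 4 statements merged into one kernel-verified Lean document; each statement's English description precedes it below -/
import Mathlib

section
/- Let G₁ be a simple graph with ν(G₁) ≥ 2, Δ(G₁) ≥ 2, and |E(G₁)| = Δ(G₁)ν(G₁) + ⌊ν(G₁)/⌈Δ(G₁)/2⌉⌋·⌊Δ(G₁)/2⌋. If ⌈Δ(G₁)/2⌉ does not divide ν(G₁), then there exists a simple graph G₂ with |E(G₂)| = |E(G₁)|, ν(G₂) = ν(G₁), Δ(G₂) = Δ(G₁), and G₂ not isomorphic to G₁. -/
open scoped Classical

/-- `M` is a matching of `G`, given as a finite set of edges. -/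
def IsMatchingFinset {V : Type*} (G : SimpleGraph V) (M : Finset (Sym2 V)) : Prop :=
  (M : Set (Sym2 V)) ⊆ G.edgeSet ∧
    ∀ e ∈ M, ∀ f ∈ M, e ≠ f → ∀ v : V, ¬(v ∈ e ∧ v ∈ f)

/-- ν(G): the maximum size of a matching of `G`. -/
noncomputable def matchingNumber {V : Type*} (G : SimpleGraph V) : ℕ :=
  sSup {n | ∃ M : Finset (Sym2 V), IsMatchingFinset G M ∧ M.card = n}

/-- A proper edge coloring of `G` using colors `< n`. -/
def IsProperEdgeColoring {V : Type*} (G : SimpleGraph V) (n : ℕ) (c : Sym2 V → ℕ) : Prop :=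
  (∀ e ∈ G.edgeSet, c e < n) ∧
    ∀ e ∈ G.edgeSet, ∀ f ∈ G.edgeSet, e ≠ f → (∃ v : V, v ∈ e ∧ v ∈ f) → c e ≠ c f

/-- χ'(G): the edge chromatic index of `G`. -/
noncomputable def chromaticIndex {V : Type*} (G : SimpleGraph V) : ℕ :=
  sInf {n | ∃ c : Sym2 V → ℕ, IsProperEdgeColoring G n c}

/-- `G` is friendly-edge-colorable: its edge set is partitioned into maximum matchings. -/
noncomputable def Friendly {V : Type*} [Fintype V] (G : SimpleGraph V) : Prop :=
  ∃ P : Finset (Finset (Sym2 V)),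
    (∀ M ∈ P, IsMatchingFinset G M ∧ M.card = matchingNumber G) ∧
    (∀ e, e ∈ G.edgeFinset ↔ ∃ M ∈ P, e ∈ M) ∧
    ∀ M ∈ P, ∀ N ∈ P, M ≠ N → Disjoint M N

/-- The graph `G` with vertex `x` deleted. -/
def delVert {V : Type*} (G : SimpleGraph V) (x : V) : SimpleGraph {v : V // v ≠ x} :=
  G.induce {v : V | v ≠ x}

/-- `G` has a perfect matching. -/
def HasPerfectMatchingFinset {V : Type*} (G : SimpleGraph V) : Prop :=
  ∃ M : Finset (Sym2 V), IsMatchingFinset G M ∧ ∀ v : V, ∃ e ∈ M, v ∈ e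

/-- `G` is factor-critical. -/
def FactorCritical {V : Type*} (G : SimpleGraph V) : Prop :=
  G.Connected ∧ ∀ x : V, HasPerfectMatchingFinset (delVert G x)

/-!
Let `c = ⌈Δ/2⌉` and write `ν = c k + r` with `1 ≤ r < c` (so `Δ ≥ 3`). Among graphs of maximum
degree `Δ` without isolated vertices, the triples (vertices, edges, matching number) that occur
are closed under addition, by disjoint union. A *block* has `c` and `Δ c + ⌊Δ/2⌋` as its last two
entries: `K_{Δ+1}` for even `Δ`, and for odd `Δ` the graph `K_{Δ+2}` minus a perfect matching on
`Δ + 1` of its vertices and minus one more edge. The star `K_{1,Δ}` contributes `Δ` edges and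
matching number `1`. Hence `k` blocks and `r` stars have the parameters of `G₁`, and so does a
second graph with a different number of vertices: for `r ≥ 2` replace two stars by two stars
sharing a leaf; for `r = 1` replace one block and the star by a graph with matching number `c + 1`
and `Δ (c + 1) + ⌊Δ/2⌋` edges (the complement of `C_{Δ+3}` for even `Δ`, a block with a pendant
star for odd `Δ`). One of the two graphs differs from `G₁` in its number of vertices.

The upper bounds on matching numbers all come from `ν ≤ #C + #S / 2` when every edge meets `C`
or lies inside `S`.
-/

open Finset SimpleGraph

section Matching

variable {V : Type*} {G : SimpleGraph V} {M : Finset (Sym2 V)}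

lemma IsMatchingFinset.card_filter_mem_le_one (hM : IsMatchingFinset G M) (v : V) :
    #{e ∈ M | v ∈ e} ≤ 1 :=
  card_le_one.mpr fun e he f hf => by
    by_contra hne
    exact hM.2 e (mem_filter.mp he).1 f (mem_filter.mp hf).1 hne v
      ⟨(mem_filter.mp he).2, (mem_filter.mp hf).2⟩

lemma IsMatchingFinset.card_le_card_add_card_div_two (hM : IsMatchingFinset G M)
    (C S : Finset V) (hCS : ∀ a b, G.Adj a b → a ∈ C ∨ b ∈ C ∨ a ∈ S ∧ b ∈ S) :
    #M ≤ #C + #S / 2 := by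
  have hsplit := card_filter_add_card_filter_not (s := M) (fun e => ∃ v ∈ C, v ∈ e)
  have hmeet : #{e ∈ M | ∃ v ∈ C, v ∈ e} * 1 ≤ #C * 1 :=
    card_mul_le_card_mul (fun e v => v ∈ e)
      (fun e he => by
        obtain ⟨v, hvC, hve⟩ := (mem_filter.mp he).2
        exact card_pos.mpr ⟨v, mem_filter.mpr ⟨hvC, hve⟩⟩)
      (fun v _ => (card_le_card (filter_subset_filter _ (filter_subset _ M))).trans
        (hM.card_filter_mem_le_one v))
  have hinside : #{e ∈ M | ¬∃ v ∈ C, v ∈ e} * 2 ≤ #S * 1 :=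
    card_mul_le_card_mul (fun e v => v ∈ e)
      (fun e he => by
        obtain ⟨heM, hnC⟩ := mem_filter.mp he
        induction e using Sym2.ind with
        | _ a b =>
        have hab : G.Adj a b := hM.1 heM
        obtain ⟨haS, hbS⟩ := ((hCS a b hab).resolve_left fun h => hnC ⟨a, h, by simp⟩)
          |>.resolve_left fun h => hnC ⟨b, h, by simp⟩
        calc 2 = #{a, b} := (card_pair hab.ne).symm
          _ ≤ _ := card_le_card fun x hx => by
            rcases mem_insert.mp hx with rfl | hx
            · exact mem_filter.mpr ⟨haS, Sym2.mem_mk_left _ _⟩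
            · rw [mem_singleton.mp hx]
              exact mem_filter.mpr ⟨hbS, Sym2.mem_mk_right _ _⟩)
      (fun v _ => (card_le_card (filter_subset_filter _ (filter_subset _ M))).trans
        (hM.card_filter_mem_le_one v))
  omega

variable [Fintype V]

lemma bddAbove_isMatchingFinset_card :
    BddAbove {n | ∃ M : Finset (Sym2 V), IsMatchingFinset G M ∧ #M = n} :=
  ⟨Fintype.card (Sym2 V), by rintro _ ⟨M, -, rfl⟩; exact card_le_univ M⟩

lemma IsMatchingFinset.card_le_matchingNumber (hM : IsMatchingFinset G M) :
    #M ≤ matchingNumber G :=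
  le_csSup bddAbove_isMatchingFinset_card ⟨M, hM, rfl⟩

lemma exists_isMatchingFinset_card_eq_matchingNumber (G : SimpleGraph V) :
    ∃ M, IsMatchingFinset G M ∧ #M = matchingNumber G :=
  Nat.sSup_mem (s := {n | ∃ M, IsMatchingFinset G M ∧ #M = n}) ⟨0, ∅, ⟨by simp, by simp⟩, rfl⟩
    bddAbove_isMatchingFinset_card

lemma matchingNumber_le_card_add_card_div_two (C S : Finset V)
    (hCS : ∀ a b, G.Adj a b → a ∈ C ∨ b ∈ C ∨ a ∈ S ∧ b ∈ S) :
    matchingNumber G ≤ #C + #S / 2 := by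
  obtain ⟨M, hM, hcard⟩ := exists_isMatchingFinset_card_eq_matchingNumber G
  exact hcard ▸ hM.card_le_card_add_card_div_two C S hCS

lemma matchingNumber_le_card_div_two (G : SimpleGraph V) :
    matchingNumber G ≤ Fintype.card V / 2 := by
  simpa using matchingNumber_le_card_add_card_div_two (G := G) ∅ univ (by simp)

lemma card_le_matchingNumber {ι : Type*} [Fintype ι] (m : ι → Sym2 V)
    (hm : ∀ i, m i ∈ G.edgeSet) (hdisj : ∀ i j, i ≠ j → ∀ v, ¬(v ∈ m i ∧ v ∈ m j)) :
    Fintype.card ι ≤ matchingNumber G := by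
  have hinj : Function.Injective m := fun i j h => by
    by_contra hne
    exact hdisj i j hne _ ⟨Sym2.out_fst_mem _, h ▸ Sym2.out_fst_mem _⟩
  have hM : IsMatchingFinset G (univ.image m) := by
    refine ⟨by simpa [Set.range_subset_iff] using hm, ?_⟩
    simp only [mem_image, mem_univ, true_and]
    rintro _ ⟨i, rfl⟩ _ ⟨j, rfl⟩ hne
    exact hdisj i j (fun h => hne (h ▸ rfl))
  simpa [card_image_of_injective _ hinj] using hM.card_le_matchingNumber

lemma le_matchingNumber_of_disjoint_pairs {n : ℕ} {G : SimpleGraph (Fin n)} (ν : ℕ)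
    (a b : ℕ → ℕ) (hab : ∀ i < ν, a i < n ∧ b i < n)
    (hadj : ∀ i (hi : i < ν), G.Adj ⟨a i, (hab i hi).1⟩ ⟨b i, (hab i hi).2⟩)
    (hdisj : ∀ i < ν, ∀ j < ν, i ≠ j → a i ≠ a j ∧ a i ≠ b j ∧ b i ≠ b j) :
    ν ≤ matchingNumber G := by
  simpa using card_le_matchingNumber (G := G)
    (fun i : Fin ν => s(⟨a i, (hab i i.2).1⟩, ⟨b i, (hab i i.2).2⟩)) (fun i => hadj i i.2)
    (fun i j hij v ⟨hvi, hvj⟩ => by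
      have hij' : i.val ≠ j.val := Fin.val_ne_iff.mpr hij
      have := hdisj i i.2 j j.2 hij'
      have := hdisj j j.2 i i.2 hij'.symm
      simp only [Sym2.mem_iff, Fin.ext_iff] at hvi hvj
      omega)

end Matching

section Embedding

variable {V W : Type*} {G : SimpleGraph V} {H : SimpleGraph W} (f : G ↪g H)

lemma IsMatchingFinset.image_embedding [DecidableEq W] {M : Finset (Sym2 V)}
    (hM : IsMatchingFinset G M) :
    IsMatchingFinset H (M.image (Sym2.map f)) := by
  refine ⟨fun e he => ?_, ?_⟩
  · obtain ⟨e, heM, rfl⟩ := mem_image.mp he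
    exact (f.map_mem_edgeSet_iff).mpr (hM.1 heM)
  · simp only [mem_image]
    rintro _ ⟨e, he, rfl⟩ _ ⟨e', he', rfl⟩ hne w ⟨hw, hw'⟩
    obtain ⟨v, hv, rfl⟩ := Sym2.mem_map.mp hw
    obtain ⟨v', hv', hvv'⟩ := Sym2.mem_map.mp hw'
    rw [f.injective hvv'] at hv'
    exact hM.2 e he e' he' (fun h => hne (h ▸ rfl)) v ⟨hv, hv'⟩

lemma IsMatchingFinset.preimage_embedding {M : Finset (Sym2 W)} (hM : IsMatchingFinset H M) :
    IsMatchingFinset G (M.preimage (Sym2.map f) (Sym2.map.injective f.injective).injOn) := by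
  refine ⟨fun e he => (f.map_mem_edgeSet_iff).mp (hM.1 (mem_preimage.mp he)), ?_⟩
  intro e he e' he' hne v ⟨hv, hv'⟩
  exact hM.2 _ (mem_preimage.mp he) _ (mem_preimage.mp he')
    (fun h => hne (Sym2.map.injective f.injective h)) (f v)
    ⟨Sym2.mem_map.mpr ⟨v, hv, rfl⟩, Sym2.mem_map.mpr ⟨v, hv', rfl⟩⟩

end Embedding

namespace SimpleGraph

variable {V W : Type*} {G : SimpleGraph V} {H : SimpleGraph W}

lemma exists_eq_map_inl_or_inr_of_mem_edgeSet_sum (e : Sym2 (V ⊕ W)) (he : e ∈ (G ⊕g H).edgeSet) :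
    (∃ e' : Sym2 V, e = e'.map Sum.inl) ∨ ∃ e' : Sym2 W, e = e'.map Sum.inr := by
  induction e using Sym2.ind with
  | _ x y =>
  rcases x with a | a <;> rcases y with b | b
  · exact .inl ⟨s(a, b), rfl⟩
  · simp at he
  · simp at he
  · exact .inr ⟨s(a, b), rfl⟩

lemma degree_sum_inl (v : V) [Fintype (G.neighborSet v)]
    [Fintype ((G ⊕g H).neighborSet (.inl v))] : (G ⊕g H).degree (.inl v) = G.degree v := by
  rw [← card_neighborSet_eq_degree, ← card_neighborSet_eq_degree]
  exact (Fintype.card_congr (Equiv.setCongr (neighborSet_sum_inl v))).trans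
    (Fintype.card_congr (Equiv.Set.image _ _ Sum.inl_injective).symm)

lemma degree_sum_inr (w : W) [Fintype (H.neighborSet w)]
    [Fintype ((G ⊕g H).neighborSet (.inr w))] : (G ⊕g H).degree (.inr w) = H.degree w := by
  rw [← card_neighborSet_eq_degree, ← card_neighborSet_eq_degree]
  exact (Fintype.card_congr (Equiv.setCongr (neighborSet_sum_inr w))).trans
    (Fintype.card_congr (Equiv.Set.image _ _ Sum.inr_injective).symm)

variable [Fintype V] [Fintype W]

lemma card_edgeFinset_sum : #(G ⊕g H).edgeFinset = #G.edgeFinset + #H.edgeFinset := by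
  simp only [edgeFinset_card, ← Fintype.card_sum]
  exact Fintype.card_congr edgeSetSumEquiv

lemma maxDegree_sum : (G ⊕g H).maxDegree = max G.maxDegree H.maxDegree := by
  refine le_antisymm (maxDegree_le_of_forall_degree_le _ _ ?_) (max_le ?_ ?_)
  · rintro (v | w)
    · rw [degree_sum_inl]
      exact (degree_le_maxDegree G v).trans (le_max_left _ _)
    · rw [degree_sum_inr]
      exact (degree_le_maxDegree H w).trans (le_max_right _ _)
  · exact Embedding.sumInl.toCopy.maxDegree_mono
  · exact Embedding.sumInr.toCopy.maxDegree_mono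

end SimpleGraph

lemma Sym2.map_inl_ne_map_inr {V W : Type*} (e : Sym2 V) (e' : Sym2 W) :
    e.map Sum.inl ≠ e'.map Sum.inr := by
  induction e using Sym2.ind with
  | _ a b => induction e' using Sym2.ind with
    | _ c d => simp

lemma IsMatchingFinset.sum {V W : Type*} {G : SimpleGraph V} {H : SimpleGraph W}
    {MG : Finset (Sym2 V)} {MH : Finset (Sym2 W)} (hMG : IsMatchingFinset G MG)
    (hMH : IsMatchingFinset H MH) :
    IsMatchingFinset (G ⊕g H) (MG.image (Sym2.map Sum.inl) ∪ MH.image (Sym2.map Sum.inr)) := by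
  have hMG' := hMG.image_embedding (Embedding.sumInl (H := H))
  have hMH' := hMH.image_embedding (Embedding.sumInr (G := G))
  have hcross : ∀ e ∈ MG.image (Sym2.map Sum.inl), ∀ e' ∈ MH.image (Sym2.map Sum.inr),
      ∀ x, ¬(x ∈ e ∧ x ∈ e') := by
    simp only [mem_image]
    rintro _ ⟨e, -, rfl⟩ _ ⟨e', -, rfl⟩ x ⟨hx, hx'⟩
    obtain ⟨a, -, rfl⟩ := Sym2.mem_map.mp hx
    obtain ⟨b, -, hb⟩ := Sym2.mem_map.mp hx'
    exact Sum.inr_ne_inl hb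
  refine ⟨fun e he => (mem_union.mp he).elim (hMG'.1 ·) (hMH'.1 ·), ?_⟩
  simp only [mem_union]
  rintro e (he | he) e' (he' | he') hne x
  · exact hMG'.2 e he e' he' hne x
  · exact hcross e he e' he' x
  · exact fun h => hcross e' he' e he x h.symm
  · exact hMH'.2 e he e' he' hne x

lemma matchingNumber_sum {V W : Type*} [Fintype V] [Fintype W] (G : SimpleGraph V)
    (H : SimpleGraph W) : matchingNumber (G ⊕g H) = matchingNumber G + matchingNumber H := by
  apply le_antisymm
  · obtain ⟨M, hM, hcard⟩ := exists_isMatchingFinset_card_eq_matchingNumber (G ⊕g H)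
    have hMG := hM.preimage_embedding Embedding.sumInl
    have hMH := hM.preimage_embedding Embedding.sumInr
    rw [← hcard]
    refine le_trans ?_ (add_le_add hMG.card_le_matchingNumber hMH.card_le_matchingNumber)
    calc #M ≤ #((M.preimage _ (Sym2.map.injective Sum.inl_injective).injOn).image
          (Sym2.map Sum.inl) ∪
          (M.preimage _ (Sym2.map.injective Sum.inr_injective).injOn).image (Sym2.map Sum.inr)) :=
          card_le_card fun e he => by
            obtain ⟨e', rfl⟩ | ⟨e', rfl⟩ := exists_eq_map_inl_or_inr_of_mem_edgeSet_sum e (hM.1 he)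
            · exact mem_union_left _ (mem_image_of_mem _ (mem_preimage.mpr he))
            · exact mem_union_right _ (mem_image_of_mem _ (mem_preimage.mpr he))
      _ ≤ _ := (card_union_le _ _).trans (add_le_add card_image_le card_image_le)
  · obtain ⟨MG, hMG, hG⟩ := exists_isMatchingFinset_card_eq_matchingNumber G
    obtain ⟨MH, hMH, hH⟩ := exists_isMatchingFinset_card_eq_matchingNumber H
    have hdisj : Disjoint (MG.image (Sym2.map Sum.inl)) (MH.image (Sym2.map Sum.inr)) :=
      disjoint_left.mpr fun e he he' => by
        obtain ⟨e₁, -, rfl⟩ := mem_image.mp he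
        obtain ⟨e₂, -, h⟩ := mem_image.mp he'
        exact Sym2.map_inl_ne_map_inr e₁ e₂ h.symm
    calc matchingNumber G + matchingNumber H
        = #(MG.image (Sym2.map Sum.inl) ∪ MH.image (Sym2.map Sum.inr)) := by
          rw [card_union_of_disjoint hdisj,
            card_image_of_injective _ (Sym2.map.injective Sum.inl_injective),
            card_image_of_injective _ (Sym2.map.injective Sum.inr_injective), hG, hH]
      _ ≤ _ := (hMG.sum hMH).card_le_matchingNumber

def Realizable (Δ n m ν : ℕ) : Prop :=
  ∃ (W : Type) (_ : Fintype W) (G : SimpleGraph W),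
    (∀ w, 0 < G.degree w) ∧ G.maxDegree = Δ ∧ Fintype.card W = n ∧ #G.edgeFinset = m ∧
      matchingNumber G = ν

namespace Realizable

variable {Δ n m ν n' m' ν' : ℕ}

theorem add (h : Realizable Δ n m ν) (h' : Realizable Δ n' m' ν') :
    Realizable Δ (n + n') (m + m') (ν + ν') := by
  obtain ⟨W, _, G, hpos, hΔ, rfl, rfl, rfl⟩ := h
  obtain ⟨W', _, G', hpos', hΔ', rfl, rfl, rfl⟩ := h'
  refine ⟨W ⊕ W', inferInstance, G ⊕g G', ?_, ?_, Fintype.card_sum, card_edgeFinset_sum,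
    matchingNumber_sum G G'⟩
  · rintro (w | w)
    · rw [degree_sum_inl]; exact hpos w
    · rw [degree_sum_inr]; exact hpos' w
  · rw [maxDegree_sum, hΔ, hΔ', max_self]

theorem congr (h : Realizable Δ n m ν) (hm : m = m') (hν : ν = ν') : Realizable Δ n m' ν' :=
  hm ▸ hν ▸ h

theorem nsmul_add (k : ℕ) (h : Realizable Δ n m ν) (h' : Realizable Δ n' m' ν') :
    Realizable Δ (k * n + n') (k * m + m') (k * ν + ν') := by
  induction k with
  | zero => simpa using h'
  | succ k ih => convert h.add ih using 1 <;> ring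

theorem exists_not_iso {V : Type} [Fintype V] (G₁ : SimpleGraph V)
    (h : Realizable G₁.maxDegree n #G₁.edgeFinset (matchingNumber G₁))
    (hn : n ≠ Fintype.card V) :
    ∃ (W : Type) (_ : Fintype W) (G₂ : SimpleGraph W),
      (∀ w : W, 0 < G₂.degree w) ∧
      G₂.edgeFinset.card = G₁.edgeFinset.card ∧
      matchingNumber G₂ = matchingNumber G₁ ∧
      G₂.maxDegree = G₁.maxDegree ∧
      ¬ Nonempty (G₁ ≃g G₂) := by
  obtain ⟨W, _, G₂, hpos, hΔ, rfl, hm, hν⟩ := h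
  exact ⟨W, _, G₂, hpos, hm, hν, hΔ, fun ⟨e⟩ => hn (Fintype.card_congr e.toEquiv).symm⟩

end Realizable

theorem realizable_of_degree {W : Type} [Fintype W] (G : SimpleGraph W) [DecidableRel G.Adj]
    {Δ m ν : ℕ} (hpos : ∀ w, 0 < G.degree w) (hle : ∀ w, G.degree w ≤ Δ) (w₀ : W)
    (hw₀ : G.degree w₀ = Δ) (hsum : ∑ w, G.degree w = 2 * m) (hν : matchingNumber G = ν) :
    Realizable Δ (Fintype.card W) m ν := by
  have hΔ : G.maxDegree = Δ := le_antisymm (maxDegree_le_of_forall_degree_le _ _ hle)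
    (hw₀ ▸ degree_le_maxDegree G w₀)
  have hm : #G.edgeFinset = m := by have := sum_degrees_eq_twice_card_edges G; omega
  refine ⟨W, _, G, fun w => ?_, ?_, rfl, ?_, hν⟩
  · convert hpos w
  · convert hΔ
  · convert hm

lemma degree_eq_card_of_forall_adj_iff {n : ℕ} {G : SimpleGraph (Fin n)} {v : Fin n}
    (s : Finset ℕ) (hs : ∀ x ∈ s, x < n) (h : ∀ w : Fin n, G.Adj v w ↔ w.val ∈ s) :
    G.degree v = #s := by
  rw [← card_attachFin s hs, degree]
  congr 1
  ext w
  simp [h, mem_attachFin]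

lemma sum_range_add_of_eq_const {f : ℕ → ℕ} (a b c : ℕ) (h : ∀ x, a ≤ x → f x = c) :
    ∑ x ∈ range (a + b), f x = ∑ x ∈ range a, f x + b * c := by
  rw [sum_range_add, sum_congr rfl fun x _ => h (a + x) (Nat.le_add_right a x), sum_const,
    card_range, smul_eq_mul]

theorem realizable_star {Δ : ℕ} (hΔ : 1 ≤ Δ) : Realizable Δ (Δ + 1) Δ 1 := by
  set G := starGraph (0 : Fin (Δ + 1))
  have hdeg (v : Fin (Δ + 1)) : G.degree v = if v = 0 then Δ else 1 := by
    split_ifs with hv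
    · rw [hv, degree_starGraph_center, Fintype.card_fin, Nat.add_sub_cancel]
    · exact degree_starGraph_of_ne_center hv
  have hν_le : matchingNumber G ≤ 1 := by
    simpa using matchingNumber_le_card_add_card_div_two {0} ∅ fun a b hab => by
      simpa using (starGraph_adj.mp hab).2
  have hν_ge : 1 ≤ matchingNumber G := by
    simpa using card_le_matchingNumber (G := G) (ι := Unit) (fun _ => s(0, Fin.last Δ))
      (fun _ => starGraph_adj.mpr ⟨by simp [Fin.ext_iff]; omega, .inl rfl⟩)
      (fun i j hij => absurd (Subsingleton.elim i j) hij)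
  simpa using realizable_of_degree G
    (fun v => by rw [hdeg]; split_ifs <;> omega) (fun v => by rw [hdeg]; split_ifs <;> omega)
    0 (by rw [hdeg, if_pos rfl])
    (by simp [Fin.sum_univ_succ, hdeg, Fin.succ_ne_zero]; ring) (le_antisymm hν_le hν_ge)

/-- Two copies of the star `K_{1,Δ}` glued at a leaf: centres `0` and `1`, common leaf `2`. -/
def doubleStar (Δ : ℕ) : SimpleGraph (Fin (2 * Δ + 1)) :=
  SimpleGraph.fromRel fun v w =>
    (v.val = 0 ∧ 2 ≤ w.val ∧ w.val ≤ Δ + 1) ∨ (v.val = 1 ∧ (w.val = 2 ∨ Δ + 2 ≤ w.val))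

lemma doubleStar_adj {Δ : ℕ} {v w : Fin (2 * Δ + 1)} :
    (doubleStar Δ).Adj v w ↔ v.val ≠ w.val ∧
      ((v.val = 0 ∧ 2 ≤ w.val ∧ w.val ≤ Δ + 1) ∨ (v.val = 1 ∧ (w.val = 2 ∨ Δ + 2 ≤ w.val)) ∨
        (w.val = 0 ∧ 2 ≤ v.val ∧ v.val ≤ Δ + 1) ∨ (w.val = 1 ∧ (v.val = 2 ∨ Δ + 2 ≤ v.val))) := by
  rw [doubleStar, fromRel_adj, Fin.ne_iff_vne, or_assoc]

lemma degree_doubleStar {Δ : ℕ} (hΔ : 2 ≤ Δ) (v : Fin (2 * Δ + 1)) :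
    (doubleStar Δ).degree v = if v.val ≤ 1 then Δ else if v.val = 2 then 2 else 1 := by
  have hv := v.isLt
  rcases (by omega : v.val = 0 ∨ v.val = 1 ∨ v.val = 2 ∨ (3 ≤ v.val ∧ v.val ≤ Δ + 1) ∨
    Δ + 2 ≤ v.val) with h | h | h | h | h
  · rw [degree_eq_card_of_forall_adj_iff (Ico 2 (Δ + 2)) (fun x hx => by simp at hx; omega)
      (by simp only [doubleStar_adj, mem_Ico]; omega)]
    simp [h]
  · rw [degree_eq_card_of_forall_adj_iff (insert 2 (Ico (Δ + 2) (2 * Δ + 1)))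
      (fun x hx => by simp at hx; omega)
      (by simp only [doubleStar_adj, mem_insert, mem_Ico]; omega)]
    simp [h]
    omega
  · rw [degree_eq_card_of_forall_adj_iff {0, 1} (fun x hx => by simp at hx; omega)
      (by simp only [doubleStar_adj, mem_insert, mem_singleton]; omega)]
    simp [h]
  · rw [degree_eq_card_of_forall_adj_iff {0} (fun x hx => by simp at hx; omega)
      (by simp only [doubleStar_adj, mem_singleton]; omega)]
    simp [show ¬v.val ≤ 1 by omega, show v.val ≠ 2 by omega]
  · rw [degree_eq_card_of_forall_adj_iff {1} (fun x hx => by simp at hx; omega)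
      (by simp only [doubleStar_adj, mem_singleton]; omega)]
    simp [show ¬v.val ≤ 1 by omega, show v.val ≠ 2 by omega]

theorem realizable_doubleStar {Δ : ℕ} (hΔ : 2 ≤ Δ) : Realizable Δ (2 * Δ + 1) (2 * Δ) 2 := by
  set G := doubleStar Δ
  have hν_le : matchingNumber G ≤ 2 := by
    have := matchingNumber_le_card_add_card_div_two {v : Fin (2 * Δ + 1) | v.val < 2} ∅
      fun a b hab => by
        rw [doubleStar_adj] at hab
        simp only [mem_filter, mem_univ, true_and]
        omega
    rwa [Fin.card_filter_val_lt, card_empty, min_eq_right (by omega)] at this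
  have hν_ge : 2 ≤ matchingNumber G :=
    le_matchingNumber_of_disjoint_pairs 2 (fun i => i) (fun i => 3 - i) (fun i hi => by omega)
      (fun i hi => by simp only [G, doubleStar_adj]; omega) (fun i _ j _ hij => by omega)
  have hsum : ∑ v, G.degree v = 2 * (2 * Δ) := by
    simp only [G, degree_doubleStar hΔ]
    rw [Fin.sum_univ_eq_sum_range (fun x => if x ≤ 1 then Δ else if x = 2 then 2 else 1),
      show 2 * Δ + 1 = 3 + (2 * Δ - 2) by omega,
      sum_range_add_of_eq_const 3 _ 1 fun x hx => by rw [if_neg (by omega), if_neg (by omega)]]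
    simp [sum_range_succ]
    omega
  simpa using realizable_of_degree G
    (fun v => by rw [degree_doubleStar hΔ]; split_ifs <;> omega)
    (fun v => by rw [degree_doubleStar hΔ]; split_ifs <;> omega)
    ⟨0, by omega⟩ (by rw [degree_doubleStar hΔ, if_pos (by simp)]) hsum (le_antisymm hν_le hν_ge)

theorem realizable_top {Δ m : ℕ} (hΔ : 1 ≤ Δ) (hm : 2 * m = (Δ + 1) * Δ) :
    Realizable Δ (Δ + 1) m ((Δ + 1) / 2) := by
  have hdeg (v : Fin (Δ + 1)) : (⊤ : SimpleGraph (Fin (Δ + 1))).degree v = Δ := by simp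
  have hν_le := matchingNumber_le_card_div_two (⊤ : SimpleGraph (Fin (Δ + 1)))
  have hν_ge : (Δ + 1) / 2 ≤ matchingNumber (⊤ : SimpleGraph (Fin (Δ + 1))) :=
    le_matchingNumber_of_disjoint_pairs _ (fun i => 2 * i) (fun i => 2 * i + 1)
      (fun i hi => by omega) (fun i hi => by simp [Fin.ext_iff]) (fun i _ j _ hij => by omega)
  simpa using realizable_of_degree (⊤ : SimpleGraph (Fin (Δ + 1)))
    (fun v => by rw [hdeg]; omega) (fun v => (hdeg v).le) 0 (hdeg 0) (by simp [hdeg, hm])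
    (le_antisymm (by simpa using hν_le) hν_ge)

theorem realizable_compl_cycleGraph {Δ m : ℕ} (hΔ : 1 ≤ Δ) (hm : 2 * m = (Δ + 3) * Δ) :
    Realizable Δ (Δ + 3) m ((Δ + 3) / 2) := by
  set G := (cycleGraph (Δ + 3))ᶜ
  have hdeg (v : Fin (Δ + 3)) : G.degree v = Δ := by
    rw [degree_compl, cycleGraph_degree_three_le, Fintype.card_fin]
    omega
  have hν_le := matchingNumber_le_card_div_two G
  have hν_ge : (Δ + 3) / 2 ≤ matchingNumber G :=
    le_matchingNumber_of_disjoint_pairs _ (fun i => i) (fun i => i + (Δ + 3) / 2)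
      (fun i hi => by omega)
      (fun i hi => by
        rw [compl_adj, cycleGraph_adj', Fin.coe_sub_iff_lt.mpr (Fin.mk_lt_mk.mpr (by omega)),
          Fin.coe_sub_iff_le.mpr (Fin.mk_le_mk.mpr (by omega))]
        simp [Fin.ext_iff]
        omega)
      (fun i _ j _ hij => by omega)
  simpa using realizable_of_degree G
    (fun v => by rw [hdeg]; omega) (fun v => (hdeg v).le) 0 (hdeg 0) (by simp [hdeg, hm])
    (le_antisymm (by simpa using hν_le) hν_ge)

/-- For odd `Δ`: `K_{Δ+2}` minus the perfect matching `{0,1}, {2,3}, …, {Δ-1,Δ}` and minus the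
edge `{0, Δ+1}`, so that `0` has degree `Δ - 1` and every other vertex degree `Δ`. -/
def oddBlock (Δ : ℕ) : SimpleGraph (Fin (Δ + 2)) :=
  SimpleGraph.fromRel fun v w =>
    v.val / 2 ≠ w.val / 2 ∧ ¬(v.val = 0 ∧ w.val = Δ + 1) ∧ ¬(w.val = 0 ∧ v.val = Δ + 1)

lemma oddBlock_adj {Δ : ℕ} {v w : Fin (Δ + 2)} :
    (oddBlock Δ).Adj v w ↔ v.val ≠ w.val ∧ v.val / 2 ≠ w.val / 2 ∧
      ¬(v.val = 0 ∧ w.val = Δ + 1) ∧ ¬(w.val = 0 ∧ v.val = Δ + 1) := by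
  rw [oddBlock, fromRel_adj, Fin.ne_iff_vne]
  omega

lemma degree_oddBlock {Δ : ℕ} (hΔ : Odd Δ) (v : Fin (Δ + 2)) :
    (oddBlock Δ).degree v = if v.val = 0 then Δ - 1 else Δ := by
  obtain ⟨d, rfl⟩ := hΔ
  have hv := v.isLt
  rcases (by omega : v.val = 0 ∨ v.val = 2 * d + 2 ∨ (1 ≤ v.val ∧ v.val ≤ 2 * d + 1))
    with h | h | h
  · rw [degree_eq_card_of_forall_adj_iff (Ico 2 (2 * d + 2)) (fun x hx => by simp at hx; omega)
      (by simp only [oddBlock_adj, mem_Ico]; omega)]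
    simp [h]
  · rw [degree_eq_card_of_forall_adj_iff (Ico 1 (2 * d + 2)) (fun x hx => by simp at hx; omega)
      (by simp only [oddBlock_adj, mem_Ico]; omega)]
    simp [h]
  · set p := v.val + 1 - 2 * (v.val % 2)
    rw [degree_eq_card_of_forall_adj_iff (((range (2 * d + 3)).erase v.val).erase p)
      (fun x hx => by simp at hx; omega) (by simp only [oddBlock_adj, mem_erase, mem_range]; omega),
      card_erase_of_mem (by simp; omega), card_erase_of_mem (by simp), card_range,
      if_neg (by omega)]
    omega

theorem realizable_oddBlock {Δ m : ℕ} (hΔ : Odd Δ) (hΔ3 : 3 ≤ Δ) (hm : 2 * m = (Δ + 2) * Δ - 1) :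
    Realizable Δ (Δ + 2) m ((Δ + 1) / 2) := by
  set G := oddBlock Δ
  have hpar : Δ % 2 = 1 := Nat.odd_iff.mp hΔ
  have hν_le := matchingNumber_le_card_div_two G
  rw [Fintype.card_fin] at hν_le
  have hν_ge : (Δ + 1) / 2 ≤ matchingNumber G :=
    le_matchingNumber_of_disjoint_pairs _ (fun i => 2 * i + 1) (fun i => 2 * i + 2)
      (fun i hi => by omega) (fun i hi => by simp only [G, oddBlock_adj]; omega)
      (fun i _ j _ hij => by omega)
  have hsum : ∑ v, G.degree v = 2 * m := by
    simp only [G, Fin.sum_univ_succ, degree_oddBlock hΔ]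
    simp
    have h₁ : (Δ + 2) * Δ = Δ * Δ + 2 * Δ := by ring
    have h₂ : (Δ + 1) * Δ = Δ * Δ + Δ := by ring
    omega
  simpa using realizable_of_degree G
    (fun v => by rw [degree_oddBlock hΔ]; split_ifs <;> omega)
    (fun v => by rw [degree_oddBlock hΔ]; split_ifs <;> omega)
    1 (by rw [degree_oddBlock hΔ]; simp) hsum
    (le_antisymm (by omega) hν_ge)

/-- `oddBlock Δ` on the vertices `< Δ + 2`, together with a star centred at `Δ + 2` whose leaves
are the vertex `0` of the block and the `Δ - 1` new vertices `≥ Δ + 3`. -/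
def oddBlockWithStar (Δ : ℕ) : SimpleGraph (Fin (2 * Δ + 2)) :=
  SimpleGraph.fromRel fun v w =>
    (v.val < Δ + 2 ∧ w.val < Δ + 2 ∧ v.val / 2 ≠ w.val / 2 ∧ ¬(v.val = 0 ∧ w.val = Δ + 1) ∧
      ¬(w.val = 0 ∧ v.val = Δ + 1)) ∨ (v.val = Δ + 2 ∧ (w.val = 0 ∨ Δ + 3 ≤ w.val))

lemma oddBlockWithStar_adj {Δ : ℕ} {v w : Fin (2 * Δ + 2)} :
    (oddBlockWithStar Δ).Adj v w ↔ v.val ≠ w.val ∧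
      ((v.val < Δ + 2 ∧ w.val < Δ + 2 ∧ v.val / 2 ≠ w.val / 2 ∧
        ¬(v.val = 0 ∧ w.val = Δ + 1) ∧ ¬(w.val = 0 ∧ v.val = Δ + 1)) ∨
      (v.val = Δ + 2 ∧ (w.val = 0 ∨ Δ + 3 ≤ w.val)) ∨
      (w.val = Δ + 2 ∧ (v.val = 0 ∨ Δ + 3 ≤ v.val))) := by
  rw [oddBlockWithStar, fromRel_adj, Fin.ne_iff_vne]
  omega

lemma degree_oddBlockWithStar {Δ : ℕ} (hΔ : Odd Δ) (v : Fin (2 * Δ + 2)) :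
    (oddBlockWithStar Δ).degree v = if v.val < Δ + 3 then Δ else 1 := by
  obtain ⟨d, rfl⟩ := hΔ
  have hv := v.isLt
  rcases (by omega : v.val = 0 ∨ (1 ≤ v.val ∧ v.val ≤ 2 * d + 1) ∨ v.val = 2 * d + 2 ∨
    v.val = 2 * d + 3 ∨ 2 * d + 4 ≤ v.val) with h | h | h | h | h
  · rw [degree_eq_card_of_forall_adj_iff (insert (2 * d + 3) (Ico 2 (2 * d + 2)))
      (fun x hx => by simp at hx; omega)
      (by simp only [oddBlockWithStar_adj, mem_insert, mem_Ico]; omega)]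
    simp [h]
  · set p := v.val + 1 - 2 * (v.val % 2)
    rw [degree_eq_card_of_forall_adj_iff (((range (2 * d + 3)).erase v.val).erase p)
      (fun x hx => by simp at hx; omega)
      (by simp only [oddBlockWithStar_adj, mem_erase, mem_range]; omega),
      card_erase_of_mem (by simp; omega), card_erase_of_mem (by simp; omega), card_range,
      if_pos (by omega)]
    omega
  · rw [degree_eq_card_of_forall_adj_iff (Ico 1 (2 * d + 2))
      (fun x hx => by simp at hx; omega) (by simp only [oddBlockWithStar_adj, mem_Ico]; omega)]
    simp [h]
  · rw [degree_eq_card_of_forall_adj_iff (insert 0 (Ico (2 * d + 4) (2 * (2 * d + 1) + 2)))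
      (fun x hx => by simp at hx; omega)
      (by simp only [oddBlockWithStar_adj, mem_insert, mem_Ico]; omega)]
    simp [h]
    omega
  · rw [degree_eq_card_of_forall_adj_iff {2 * d + 3} (fun x hx => by simp at hx; omega)
      (by simp only [oddBlockWithStar_adj, mem_singleton]; omega), card_singleton,
      if_neg (by omega)]

theorem realizable_oddBlockWithStar {Δ m : ℕ} (hΔ : Odd Δ) (hΔ3 : 3 ≤ Δ)
    (hm : 2 * m = (Δ + 3) * Δ + (Δ - 1)) :
    Realizable Δ (2 * Δ + 2) m ((Δ + 1) / 2 + 1) := by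
  set G := oddBlockWithStar Δ
  have hpar : Δ % 2 = 1 := Nat.odd_iff.mp hΔ
  have hν_le : matchingNumber G ≤ (Δ + 1) / 2 + 1 := by
    have := matchingNumber_le_card_add_card_div_two (G := G) {⟨Δ + 2, by omega⟩}
      {v : Fin (2 * Δ + 2) | v.val < Δ + 2} fun a b hab => by
        rw [oddBlockWithStar_adj] at hab
        simp only [mem_filter, mem_univ, true_and, mem_singleton, Fin.ext_iff]
        omega
    rw [Fin.card_filter_val_lt, card_singleton, min_eq_right (by omega)] at this
    omega
  have hν_ge : (Δ + 1) / 2 + 1 ≤ matchingNumber G :=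
    le_matchingNumber_of_disjoint_pairs _ (fun i => 2 * i + 1) (fun i => 2 * i + 2)
      (fun i hi => by omega) (fun i hi => by simp only [G, oddBlockWithStar_adj]; omega)
      (fun i _ j _ hij => by omega)
  have hsum : ∑ v, G.degree v = 2 * m := by
    simp only [G, degree_oddBlockWithStar hΔ]
    rw [Fin.sum_univ_eq_sum_range (fun x => if x < Δ + 3 then Δ else 1),
      show 2 * Δ + 2 = (Δ + 3) + (Δ - 1) by omega,
      sum_range_add_of_eq_const _ _ 1 fun x hx => if_neg (by omega),
      sum_const_nat fun x hx => if_pos (mem_range.mp hx), card_range, hm, mul_one]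
  simpa using realizable_of_degree G
    (fun v => by rw [degree_oddBlockWithStar hΔ]; split_ifs <;> omega)
    (fun v => by rw [degree_oddBlockWithStar hΔ]; split_ifs <;> omega)
    0 (by rw [degree_oddBlockWithStar hΔ]; simp) hsum (le_antisymm hν_le hν_ge)

theorem exists_block_realizations {Δ : ℕ} (hΔ : 3 ≤ Δ) :
    ∃ nB nQ, nQ ≠ nB + (Δ + 1) ∧
      Realizable Δ nB (Δ * ((Δ + 1) / 2) + Δ / 2) ((Δ + 1) / 2) ∧
      Realizable Δ nQ (Δ * ((Δ + 1) / 2 + 1) + Δ / 2) ((Δ + 1) / 2 + 1) := by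
  obtain ⟨d, rfl | rfl⟩ := Nat.even_or_odd' Δ
  · have hc : (2 * d + 1) / 2 = d := by omega
    have hh : 2 * d / 2 = d := by omega
    refine ⟨2 * d + 1, 2 * d + 3, by omega, realizable_top (by omega) ?_,
      (realizable_compl_cycleGraph (by omega) ?_).congr rfl (by omega)⟩ <;>
    · rw [hc, hh]
      ring
  · have hc : (2 * d + 1 + 1) / 2 = d + 1 := by omega
    have hh : (2 * d + 1) / 2 = d := by omega
    have hodd : Odd (2 * d + 1) := odd_two_mul_add_one d
    refine ⟨2 * d + 3, 2 * (2 * d + 1) + 2, by omega,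
      realizable_oddBlock hodd (by omega) ?_, realizable_oddBlockWithStar hodd (by omega) ?_⟩
    · have : (2 * d + 1 + 2) * (2 * d + 1) = 2 * ((2 * d + 1) * (d + 1) + d) + 1 := by ring
      rw [hc, hh]
      omega
    · rw [hc, hh, Nat.add_sub_cancel]
      ring

theorem exists_realizable_ne_of_blocks {Δ c h nB nQ : ℕ} (hΔ : 2 ≤ Δ)
    (hB : Realizable Δ nB (Δ * c + h) c) (hQ : Realizable Δ nQ (Δ * (c + 1) + h) (c + 1))
    (hnQ : nQ ≠ nB + (Δ + 1)) {k r : ℕ} (hr : 1 ≤ r) (hν : 2 ≤ c * k + r) (N : ℕ) :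
    ∃ n, n ≠ N ∧ Realizable Δ n (Δ * (c * k + r) + k * h) (c * k + r) := by
  have hS := realizable_star (by omega : 1 ≤ Δ)
  suffices ∃ n₁ n₂, n₁ ≠ n₂ ∧ Realizable Δ n₁ (Δ * (c * k + r) + k * h) (c * k + r) ∧
      Realizable Δ n₂ (Δ * (c * k + r) + k * h) (c * k + r) by
    obtain ⟨n₁, n₂, hne, h₁, h₂⟩ := this
    by_cases hN : n₁ = N
    · exact ⟨n₂, hN ▸ hne.symm, h₂⟩
    · exact ⟨n₁, hN, h₁⟩
  rcases (by omega : r = 1 ∨ 2 ≤ r) with rfl | hr₂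
  · obtain ⟨k, rfl⟩ : ∃ k', k = k' + 1 :=
      ⟨k - 1, by rcases k with _ | k <;> simp_all⟩
    refine ⟨_, _, ?_, (hB.nsmul_add (k + 1) hS).congr (by ring) (by ring),
      (hB.nsmul_add k hQ).congr (by ring) (by ring)⟩
    have : (k + 1) * nB = k * nB + nB := by ring
    omega
  · obtain ⟨r, rfl⟩ : ∃ r', r = r' + 2 := ⟨r - 2, by omega⟩
    refine ⟨_, _, ?_, (hB.nsmul_add k (hS.nsmul_add (r + 1) hS)).congr (by ring) (by ring),
      (hB.nsmul_add k (hS.nsmul_add r (realizable_doubleStar hΔ))).congr (by ring) (by ring)⟩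
    have : (r + 1) * (Δ + 1) = r * (Δ + 1) + (Δ + 1) := by ring
    omega

theorem stmt_8_general {V : Type} [Fintype V] (G₁ : SimpleGraph V)
    (hν : 2 ≤ matchingNumber G₁) (hΔ : 2 ≤ G₁.maxDegree)
    (hE : G₁.edgeFinset.card =
      G₁.maxDegree * matchingNumber G₁ +
        (matchingNumber G₁ / ((G₁.maxDegree + 1) / 2)) * (G₁.maxDegree / 2))
    (hndvd : ¬ ((G₁.maxDegree + 1) / 2 ∣ matchingNumber G₁)) :
    ∃ (W : Type) (_ : Fintype W) (G₂ : SimpleGraph W),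
      (∀ w : W, 0 < G₂.degree w) ∧
      G₂.edgeFinset.card = G₁.edgeFinset.card ∧
      matchingNumber G₂ = matchingNumber G₁ ∧
      G₂.maxDegree = G₁.maxDegree ∧
      ¬ Nonempty (G₁ ≃g G₂) := by
  have hΔ₃ : 3 ≤ G₁.maxDegree := by
    by_contra h
    exact hndvd (by rw [show (G₁.maxDegree + 1) / 2 = 1 by omega]; exact one_dvd _)
  have hr : 1 ≤ matchingNumber G₁ % ((G₁.maxDegree + 1) / 2) :=
    Nat.pos_of_ne_zero fun h => hndvd (Nat.dvd_of_mod_eq_zero h)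
  obtain ⟨nB, nQ, hnQ, hB, hQ⟩ := exists_block_realizations hΔ₃
  obtain ⟨n, hn, hreal⟩ := exists_realizable_ne_of_blocks (by omega) hB hQ hnQ hr
    (by rwa [Nat.div_add_mod]) (Fintype.card V)
  rw [Nat.div_add_mod, ← hE] at hreal
  exact hreal.exists_not_iso G₁ hn

theorem stmt_8 {V : Type} [Fintype V] (G₁ : SimpleGraph V)
    (hiso : ∀ v : V, 0 < G₁.degree v)
    (hν : 2 ≤ matchingNumber G₁) (hΔ : 2 ≤ G₁.maxDegree)
    (hE : G₁.edgeFinset.card =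
      G₁.maxDegree * matchingNumber G₁ +
        (matchingNumber G₁ / ((G₁.maxDegree + 1) / 2)) * (G₁.maxDegree / 2))
    (hndvd : ¬ ((G₁.maxDegree + 1) / 2 ∣ matchingNumber G₁)) :
    ∃ (W : Type) (_ : Fintype W) (G₂ : SimpleGraph W),
      (∀ w : W, 0 < G₂.degree w) ∧
      G₂.edgeFinset.card = G₁.edgeFinset.card ∧
      matchingNumber G₂ = matchingNumber G₁ ∧
      G₂.maxDegree = G₁.maxDegree ∧
      ¬ Nonempty (G₁ ≃g G₂) :=
  stmt_8_general G₁ hν hΔ hE hndvd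
end

section
/- A simple graph G (with at least one edge) has an edge-set partition into maximum matchings if and only if |E(G)| = χ'(G)·ν(G), where χ'(G) is the edge chromatic index and ν(G) the maximum matching number. -/
open scoped Classical

section Aux

variable {V : Type*} [Fintype V] (G : SimpleGraph V)

lemma matching_bdd :
    BddAbove {n | ∃ M : Finset (Sym2 V), IsMatchingFinset G M ∧ M.card = n} := by
  refine ⟨Fintype.card (Sym2 V), ?_⟩
  rintro n ⟨M, _, rfl⟩
  exact Finset.card_le_univ M

lemma card_le_matchingNumber_s9 {M : Finset (Sym2 V)} (h : IsMatchingFinset G M) :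
    M.card ≤ matchingNumber G :=
  le_csSup (matching_bdd G) ⟨M, h, rfl⟩

lemma exists_chromatic_coloring :
    ∃ c : Sym2 V → ℕ, IsProperEdgeColoring G (chromaticIndex G) c := by
  have hne : {n | ∃ c : Sym2 V → ℕ, IsProperEdgeColoring G n c}.Nonempty := by
    refine ⟨Fintype.card (Sym2 V), fun e => (Fintype.equivFin (Sym2 V) e : ℕ), ?_, ?_⟩
    · intro e _; exact (Fintype.equivFin (Sym2 V) e).isLt
    · intro e _ f _ hef _ h
      exact hef ((Fintype.equivFin (Sym2 V)).injective (Fin.val_injective h))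
  exact Nat.sInf_mem hne

lemma class_isMatching (n : ℕ) (c : Sym2 V → ℕ) (hc : IsProperEdgeColoring G n c) (i : ℕ) :
    IsMatchingFinset G (G.edgeFinset.filter (fun e => c e = i)) := by
  constructor
  · intro e he
    rw [Finset.mem_coe, Finset.mem_filter] at he
    exact SimpleGraph.mem_edgeFinset.mp he.1
  · intro e he f hf hef v hv
    rw [Finset.mem_filter] at he hf
    exact hc.2 e (SimpleGraph.mem_edgeFinset.mp he.1) f (SimpleGraph.mem_edgeFinset.mp hf.1)
      hef ⟨v, hv⟩ (he.2.trans hf.2.symm)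

lemma edge_card_le (n : ℕ) (c : Sym2 V → ℕ) (hc : IsProperEdgeColoring G n c) :
    G.edgeFinset.card ≤ n * matchingNumber G := by
  have hsub : G.edgeFinset ⊆ (Finset.range n).biUnion
      (fun i => G.edgeFinset.filter (fun e => c e = i)) := by
    intro e he
    exact Finset.mem_biUnion.mpr ⟨c e,
      Finset.mem_range.mpr (hc.1 e (SimpleGraph.mem_edgeFinset.mp he)),
      Finset.mem_filter.mpr ⟨he, rfl⟩⟩
  calc G.edgeFinset.card
      ≤ ((Finset.range n).biUnion (fun i => G.edgeFinset.filter (fun e => c e = i))).card :=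
        Finset.card_le_card hsub
    _ ≤ ∑ i ∈ Finset.range n, (G.edgeFinset.filter (fun e => c e = i)).card :=
        Finset.card_biUnion_le
    _ ≤ ∑ _i ∈ Finset.range n, matchingNumber G :=
        Finset.sum_le_sum (fun i _ => card_le_matchingNumber_s9 G (class_isMatching G n c hc i))
    _ = n * matchingNumber G := by
        rw [Finset.sum_const, Finset.card_range, smul_eq_mul]

end Aux

theorem stmt_9 {V : Type*} [Fintype V] (G : SimpleGraph V)
    (hE : G.edgeFinset.Nonempty) :
    Friendly G ↔ G.edgeFinset.card = chromaticIndex G * matchingNumber G := by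
  constructor
  · rintro ⟨P, h1, h2, h3⟩
    have hunion : G.edgeFinset = P.biUnion (fun M => M) := by
      ext e
      simp only [Finset.mem_biUnion]
      exact h2 e
    have hcard : G.edgeFinset.card = P.card * matchingNumber G := by
      rw [hunion, Finset.card_biUnion h3,
        Finset.sum_congr rfl (fun M hM => (h1 M hM).2),
        Finset.sum_const, smul_eq_mul]
    have hchi : chromaticIndex G ≤ P.card := by
      apply Nat.sInf_le
      refine ⟨fun e => if h : ∃ M ∈ P, e ∈ M then
        (P.equivFin ⟨Classical.choose h, (Classical.choose_spec h).1⟩ : ℕ) else 0, ?_, ?_⟩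
      · intro e he
        have hex : ∃ M ∈ P, e ∈ M := (h2 e).mp (SimpleGraph.mem_edgeFinset.mpr he)
        simp only [dif_pos hex]
        exact (P.equivFin _).isLt
      · intro e hee f hef hne hv hcc
        obtain ⟨v, hv1, hv2⟩ := hv
        have hex : ∃ M ∈ P, e ∈ M := (h2 e).mp (SimpleGraph.mem_edgeFinset.mpr hee)
        have hfx : ∃ M ∈ P, f ∈ M := (h2 f).mp (SimpleGraph.mem_edgeFinset.mpr hef)
        simp only [dif_pos hex, dif_pos hfx] at hcc
        have hMN : Classical.choose hex = Classical.choose hfx :=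
          Subtype.ext_iff.mp (P.equivFin.injective (Fin.val_injective hcc))
        have hM := Classical.choose_spec hex
        have hN := Classical.choose_spec hfx
        exact (h1 _ hM.1).1.2 e hM.2 f (hMN ▸ hN.2) hne v ⟨hv1, hv2⟩
    obtain ⟨c, hc⟩ := exists_chromatic_coloring G
    have hle : G.edgeFinset.card ≤ chromaticIndex G * matchingNumber G :=
      edge_card_le G _ c hc
    have h2' : chromaticIndex G * matchingNumber G ≤ P.card * matchingNumber G :=
      Nat.mul_le_mul_right _ hchi
    exact le_antisymm hle (hcard ▸ h2')
  · intro h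
    obtain ⟨c, hc⟩ := exists_chromatic_coloring G
    set n := chromaticIndex G with hn
    set Mi : ℕ → Finset (Sym2 V) := fun i => G.edgeFinset.filter (fun e => c e = i) with hMi
    have hunion : G.edgeFinset = (Finset.range n).biUnion Mi := by
      ext e
      simp only [Finset.mem_biUnion, Finset.mem_range, hMi, Finset.mem_filter]
      constructor
      · intro he; exact ⟨c e, hc.1 e (SimpleGraph.mem_edgeFinset.mp he), he, rfl⟩
      · rintro ⟨i, _, he, _⟩; exact he
    have hdisj : ∀ i ∈ Finset.range n, ∀ j ∈ Finset.range n, i ≠ j → Disjoint (Mi i) (Mi j) := by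
      intro i _ j _ hij
      rw [Finset.disjoint_left]
      intro e hei hej
      exact hij ((Finset.mem_filter.mp hei).2.symm.trans (Finset.mem_filter.mp hej).2)
    have hsum : ∑ i ∈ Finset.range n, (Mi i).card = n * matchingNumber G := by
      rw [← Finset.card_biUnion hdisj, ← hunion, h]
    have hle : ∀ i ∈ Finset.range n, (Mi i).card ≤ matchingNumber G :=
      fun i _ => card_le_matchingNumber_s9 G (class_isMatching G n c hc i)
    have heach : ∀ i ∈ Finset.range n, (Mi i).card = matchingNumber G := by
      by_contra hcon
      push_neg at hcon
      obtain ⟨i, hi, hne⟩ := hcon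
      have hlt : ∑ i ∈ Finset.range n, (Mi i).card <
          ∑ _i ∈ Finset.range n, matchingNumber G :=
        Finset.sum_lt_sum hle ⟨i, hi, lt_of_le_of_ne (hle i hi) hne⟩
      rw [hsum, Finset.sum_const, Finset.card_range, smul_eq_mul] at hlt
      exact lt_irrefl _ hlt
    refine ⟨(Finset.range n).image Mi, ?_, ?_, ?_⟩
    · intro M hM
      obtain ⟨i, hi, rfl⟩ := Finset.mem_image.mp hM
      exact ⟨class_isMatching G n c hc i, heach i hi⟩
    · intro e
      constructor
      · intro he
        exact ⟨Mi (c e), Finset.mem_image.mpr ⟨c e,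
          Finset.mem_range.mpr (hc.1 e (SimpleGraph.mem_edgeFinset.mp he)), rfl⟩,
          Finset.mem_filter.mpr ⟨he, rfl⟩⟩
      · rintro ⟨M, hM, heM⟩
        obtain ⟨i, hi, rfl⟩ := Finset.mem_image.mp hM
        exact (Finset.mem_filter.mp heM).1
    · intro M hM N hN hMN
      obtain ⟨i, hi, rfl⟩ := Finset.mem_image.mp hM
      obtain ⟨j, hj, rfl⟩ := Finset.mem_image.mp hN
      exact hdisj i hi j hj (fun hij => hMN (by rw [hij]))
end

section
/- Let G be a friendly-edge-colorable simple graph. If there exists a vertex x with ν(G \ x) < ν(G), then deg_G(x) = χ'(G). -/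
open scoped Classical

/-!
A maximum matching of `G` that missed `x` would be a matching of `G \ x`, so when
`ν(G \ x) < ν(G)` every maximum matching uses exactly one edge at `x`. In a partition of the
edges into maximum matchings the edges at `x` are therefore in bijection with the classes, so
`deg x` is the number of classes. Coloring each edge by its class is proper, giving
`χ'(G) ≤ deg x`, and the reverse inequality holds for any vertex.
-/

namespace IsMatchingFinset

variable {V W : Type*} {G : SimpleGraph V}

lemma subset_edgeFinset [Fintype G.edgeSet] {M : Finset (Sym2 V)} (hM : IsMatchingFinset G M) :
    M ⊆ G.edgeFinset :=
  fun _ he => SimpleGraph.mem_edgeFinset.mpr (hM.1 he)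

lemma card_filter_mem_le_one_s12 {M : Finset (Sym2 V)} (hM : IsMatchingFinset G M) (x : V) :
    (M.filter (x ∈ ·)).card ≤ 1 := by
  refine Finset.card_le_one.mpr fun e he f hf => ?_
  rw [Finset.mem_filter] at he hf
  by_contra hne
  exact hM.2 e he.1 f hf.1 hne x ⟨he.2, hf.2⟩

lemma preimage {G' : SimpleGraph W} (f : G ↪g G') {M : Finset (Sym2 W)}
    (hM : IsMatchingFinset G' M) :
    IsMatchingFinset G (M.preimage (Sym2.map f) (Sym2.map.injective f.injective).injOn) := by
  refine ⟨fun e he => ?_, fun e he e' he' hne v hv => ?_⟩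
  · exact (f.map_mem_edgeSet_iff).mp (hM.1 (Finset.mem_preimage.mp he))
  · rw [Finset.mem_preimage] at he he'
    exact hM.2 _ he _ he' ((Sym2.map.injective f.injective).ne hne) (f v)
      ⟨Sym2.mem_map.mpr ⟨v, hv.1, rfl⟩, Sym2.mem_map.mpr ⟨v, hv.2, rfl⟩⟩

end IsMatchingFinset

lemma le_matchingNumber {V : Type*} [Fintype V] {G : SimpleGraph V} {M : Finset (Sym2 V)}
    (hM : IsMatchingFinset G M) : M.card ≤ matchingNumber G := by
  refine le_csSup ⟨G.edgeFinset.card, ?_⟩ ⟨M, hM, rfl⟩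
  rintro n ⟨N, hN, rfl⟩
  exact Finset.card_le_card hN.subset_edgeFinset

lemma card_le_matchingNumber_delVert {V : Type*} [Fintype V] {G : SimpleGraph V} {x : V}
    {M : Finset (Sym2 V)} (hM : IsMatchingFinset G M) (hxM : ∀ e ∈ M, x ∉ e) :
    M.card ≤ matchingNumber (delVert G x) := by
  set f := SimpleGraph.Embedding.induce (G := G) {v : V | v ≠ x}
  have hrange : ∀ e ∈ M, e ∈ Set.range (Sym2.map f) := by
    intro e he
    induction e using Sym2.ind with
    | _ a b =>
      have ha : a ≠ x := fun h => hxM _ he (h ▸ Sym2.mem_mk_left a b)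
      have hb : b ≠ x := fun h => hxM _ he (h ▸ Sym2.mem_mk_right a b)
      exact ⟨s(⟨a, ha⟩, ⟨b, hb⟩), rfl⟩
  calc M.card = (M.preimage (Sym2.map f) (Sym2.map.injective f.injective).injOn).card := by
        rw [← Finset.card_image_of_injective _ (Sym2.map.injective f.injective),
          Finset.image_preimage, Finset.filter_true_of_mem hrange]
    _ ≤ matchingNumber (delVert G x) := le_matchingNumber (hM.preimage f)

lemma exists_mem_of_matchingNumber_delVert_lt {V : Type*} [Fintype V] {G : SimpleGraph V}
    {x : V} (hx : matchingNumber (delVert G x) < matchingNumber G) {M : Finset (Sym2 V)}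
    (hM : IsMatchingFinset G M) (hcard : M.card = matchingNumber G) : ∃ e ∈ M, x ∈ e := by
  by_contra! hxM
  have := card_le_matchingNumber_delVert hM hxM
  omega

section EdgePartition

variable {V : Type*} [Fintype V] {G : SimpleGraph V} {P : Finset (Finset (Sym2 V))}

lemma degree_eq_card_of_isMatchingFinset_cover (hmatch : ∀ M ∈ P, IsMatchingFinset G M)
    (hcov : ∀ e, e ∈ G.edgeFinset ↔ ∃ M ∈ P, e ∈ M)
    (hdisj : ∀ M ∈ P, ∀ N ∈ P, M ≠ N → Disjoint M N) {x : V} (hx : ∀ M ∈ P, ∃ e ∈ M, x ∈ e) :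
    G.degree x = P.card := by
  have hinc : G.incidenceFinset x = P.biUnion (fun M => M.filter (x ∈ ·)) := by
    ext e
    rw [SimpleGraph.mem_incidenceFinset, SimpleGraph.incidenceSet, Set.mem_ofPred_eq,
      ← SimpleGraph.mem_edgeFinset, hcov]
    simp only [Finset.mem_biUnion, Finset.mem_filter]
    tauto
  have hone : ∀ M ∈ P, (M.filter (x ∈ ·)).card = 1 := by
    intro M hM
    obtain ⟨e, he, hxe⟩ := hx M hM
    have : 0 < (M.filter (x ∈ ·)).card := Finset.card_pos.mpr ⟨e, Finset.mem_filter.mpr ⟨he, hxe⟩⟩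
    have := (hmatch M hM).card_filter_mem_le_one_s12 x
    omega
  rw [← SimpleGraph.card_incidenceFinset_eq_degree, hinc,
    Finset.card_biUnion fun M hM N hN hne => (hdisj M hM N hN hne).mono
      (Finset.filter_subset _ _) (Finset.filter_subset _ _),
    Finset.sum_congr rfl hone, Finset.card_eq_sum_ones]

lemma exists_isProperEdgeColoring_of_isMatchingFinset_cover
    (hmatch : ∀ M ∈ P, IsMatchingFinset G M) (hcov : ∀ e, e ∈ G.edgeFinset ↔ ∃ M ∈ P, e ∈ M) :
    ∃ c, IsProperEdgeColoring G P.card c := by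
  have hcov' : ∀ e ∈ G.edgeSet, ∃ M ∈ P, e ∈ M := fun e he =>
    (hcov e).mp (SimpleGraph.mem_edgeFinset.mpr he)
  choose! N hNP heN using hcov'
  refine ⟨fun e => if he : e ∈ G.edgeSet then P.equivFin ⟨N e, hNP e he⟩ else 0,
    fun e he => by simp [he], fun e he f hf hne ⟨v, hve, hvf⟩ hc => ?_⟩
  simp only [he, hf, dite_true, Fin.val_inj, Equiv.apply_eq_iff_eq, Subtype.mk.injEq] at hc
  exact (hmatch _ (hNP e he)).2 e (heN e he) f (hc ▸ heN f hf) hne v ⟨hve, hvf⟩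

end EdgePartition

lemma degree_le_of_isProperEdgeColoring {V : Type*} [Fintype V] {G : SimpleGraph V} {n : ℕ}
    {c : Sym2 V → ℕ} (hc : IsProperEdgeColoring G n c) (x : V) : G.degree x ≤ n := by
  rw [← SimpleGraph.card_incidenceFinset_eq_degree, ← Finset.card_range n]
  refine Finset.card_le_card_of_injOn c (fun e he => ?_) (fun e he f hf hcef => ?_)
  · rw [Finset.mem_coe, SimpleGraph.mem_incidenceFinset] at he
    exact Finset.mem_range.mpr (hc.1 e he.1)
  · rw [Finset.mem_coe, SimpleGraph.mem_incidenceFinset] at he hf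
    by_contra hne
    exact hc.2 e he.1 f hf.1 hne ⟨x, he.2, hf.2⟩ hcef

lemma chromaticIndex_eq_degree_of_isProperEdgeColoring {V : Type*} [Fintype V]
    {G : SimpleGraph V} {x : V} {c : Sym2 V → ℕ} (hc : IsProperEdgeColoring G (G.degree x) c) :
    chromaticIndex G = G.degree x :=
  le_antisymm (Nat.sInf_le ⟨c, hc⟩) <|
    le_csInf ⟨_, c, hc⟩ fun _ ⟨_, hc'⟩ => degree_le_of_isProperEdgeColoring hc' x

theorem stmt_12 {V : Type*} [Fintype V] (G : SimpleGraph V) (hG : Friendly G)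
    (x : V) (hx : matchingNumber (delVert G x) < matchingNumber G) :
    G.degree x = chromaticIndex G := by
  obtain ⟨P, hmax, hcov, hdisj⟩ := hG
  have hmatch : ∀ M ∈ P, IsMatchingFinset G M := fun M hM => (hmax M hM).1
  have hdeg : G.degree x = P.card :=
    degree_eq_card_of_isMatchingFinset_cover hmatch hcov hdisj fun M hM =>
      exists_mem_of_matchingNumber_delVert_lt hx (hmax M hM).1 (hmax M hM).2
  obtain ⟨c, hc⟩ := exists_isProperEdgeColoring_of_isMatchingFinset_cover hmatch hcov
  rw [← hdeg] at hc
  exact (chromaticIndex_eq_degree_of_isProperEdgeColoring hc).symm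
end

section
/- Let G be a friendly-edge-colorable simple graph and x a vertex with ν(G \ x) < ν(G) and E(G \ x) nonempty. Then G \ x is friendly-edge-colorable and χ'(G \ x) = χ'(G). -/
open scoped Classical

section Aux
variable {V : Type*} [Fintype V]

lemma matching_le {G : SimpleGraph V} {M : Finset (Sym2 V)}
    (hM : IsMatchingFinset G M) : M.card ≤ matchingNumber G := by
  apply le_csSup
  · exact ⟨Fintype.card (Sym2 V), fun n hn => by
      obtain ⟨N, _, hc⟩ := hn; exact hc ▸ N.card_le_univ⟩
  · exact ⟨M, hM, rfl⟩

lemma exists_max_matching (G : SimpleGraph V) :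
    ∃ M : Finset (Sym2 V), IsMatchingFinset G M ∧ M.card = matchingNumber G := by
  have h : matchingNumber G ∈ {n | ∃ M : Finset (Sym2 V), IsMatchingFinset G M ∧ M.card = n} := by
    apply Nat.sSup_mem
    · exact ⟨0, ∅, ⟨by simp, by simp⟩, rfl⟩
    · exact ⟨Fintype.card (Sym2 V), fun n hn => by
        obtain ⟨N, _, hc⟩ := hn; exact hc ▸ N.card_le_univ⟩
  exact h

def push (x : V) (e : Sym2 {v : V // v ≠ x}) : Sym2 V := e.map Subtype.val

lemma push_injective (x : V) : Function.Injective (push x) :=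
  Sym2.map.injective Subtype.val_injective

lemma not_mem_push (x : V) (e : Sym2 {v : V // v ≠ x}) : x ∉ push x e := by
  intro h
  obtain ⟨b, _, hb⟩ := Sym2.mem_map.mp h
  exact b.2 hb

lemma push_mem_edgeSet (x : V) {G : SimpleGraph V} (e : Sym2 {v : V // v ≠ x}) :
    push x e ∈ G.edgeSet ↔ e ∈ (delVert G x).edgeSet := by
  induction e using Sym2.ind with
  | _ a b => simp [push, delVert, Sym2.map_pair_eq]

lemma push_surj (x : V) (d : Sym2 V) (hd : x ∉ d) : ∃ e, push x e = d := by
  induction d using Sym2.ind with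
  | _ a b =>
    rw [Sym2.mem_iff] at hd
    push_neg at hd
    exact ⟨s(⟨a, fun h => hd.1 h.symm⟩, ⟨b, fun h => hd.2 h.symm⟩),
      by simp [push, Sym2.map_pair_eq]⟩

noncomputable def down (x : V) (M : Finset (Sym2 V)) : Finset (Sym2 {v : V // v ≠ x}) :=
  Finset.univ.filter (fun e => push x e ∈ M)

lemma mem_down {x : V} {M : Finset (Sym2 V)} {e : Sym2 {v : V // v ≠ x}} :
    e ∈ down x M ↔ push x e ∈ M := by simp [down]

lemma down_matching {x : V} {G : SimpleGraph V} {M : Finset (Sym2 V)}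
    (hM : IsMatchingFinset G M) : IsMatchingFinset (delVert G x) (down x M) := by
  constructor
  · intro e he
    rw [Finset.mem_coe, mem_down] at he
    exact (push_mem_edgeSet x e).mp (hM.1 he)
  · intro e he f hf hef v hv
    exact hM.2 _ (mem_down.mp he) _ (mem_down.mp hf) (fun h => hef (push_injective x h))
      v.val ⟨Sym2.mem_map.mpr ⟨v, hv.1, rfl⟩, Sym2.mem_map.mpr ⟨v, hv.2, rfl⟩⟩

lemma down_card (x : V) (M : Finset (Sym2 V)) :
    (down x M).card = (M.filter (fun d => x ∉ d)).card := by
  apply Finset.card_bij (fun e _ => push x e)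
  · intro e he
    exact Finset.mem_filter.mpr ⟨mem_down.mp he, not_mem_push x e⟩
  · intro e _ f _ h
    exact push_injective x h
  · intro d hd
    obtain ⟨hdM, hdx⟩ := Finset.mem_filter.mp hd
    obtain ⟨e, he⟩ := push_surj x d hdx
    exact ⟨e, mem_down.mpr (he ▸ hdM), he⟩

end Aux

section Aux2
variable {V : Type*} [Fintype V]

/-- For a maximum matching M of G, when ν(G\x) < ν(G):
    down x M is a maximum matching of G\x and ν(G\x) = ν(G) - 1. -/
lemma down_max {x : V} {G : SimpleGraph V} {M : Finset (Sym2 V)}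
    (hM : IsMatchingFinset G M) (hMc : M.card = matchingNumber G)
    (hx : matchingNumber (delVert G x) < matchingNumber G) :
    (down x M).card = matchingNumber (delVert G x) ∧
      matchingNumber (delVert G x) + 1 = matchingNumber G := by
  have hdm := down_matching (x := x) hM
  have hle : (down x M).card ≤ matchingNumber (delVert G x) := matching_le hdm
  -- M must contain an edge at x
  have hex : ∃ e ∈ M, x ∈ e := by
    by_contra h
    push_neg at h
    have : M.filter (fun d => x ∉ d) = M := Finset.filter_true_of_mem h
    rw [down_card, this, hMc] at hle
    omega
  obtain ⟨e, heM, hex⟩ := hex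
  have huniq : M.filter (fun d => x ∈ d) = {e} := by
    apply Finset.eq_singleton_iff_unique_mem.mpr
    refine ⟨Finset.mem_filter.mpr ⟨heM, hex⟩, fun f hf => ?_⟩
    obtain ⟨hfM, hfx⟩ := Finset.mem_filter.mp hf
    by_contra hne
    exact hM.2 f hfM e heM hne x ⟨hfx, hex⟩
  have hsplit : (M.filter (fun d => x ∈ d)).card + (M.filter (fun d => x ∉ d)).card
      = M.card := by
    have := Finset.card_filter_add_card_filter_not (s := M) (p := fun d => x ∈ d)
    simpa using this
  rw [huniq, Finset.card_singleton] at hsplit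
  have hcard : (down x M).card = M.card - 1 := by
    rw [down_card]
    omega
  rw [hcard, hMc] at hle ⊢
  omega

/-- χ' of a graph partitioned into maximum matchings equals the number of parts. -/
lemma chi_eq {W : Type*} [Fintype W] (H : SimpleGraph W) (Q : Finset (Finset (Sym2 W)))
    (h1 : ∀ M ∈ Q, IsMatchingFinset H M ∧ M.card = matchingNumber H)
    (h2 : ∀ e, e ∈ H.edgeFinset ↔ ∃ M ∈ Q, e ∈ M)
    (h3 : ∀ M ∈ Q, ∀ N ∈ Q, M ≠ N → Disjoint M N)
    (hν : 1 ≤ matchingNumber H) :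
    chromaticIndex H = Q.card := by
  classical
  -- edge count
  have hEeq : H.edgeFinset = Q.biUnion (fun M => M) := by
    ext e
    simp only [Finset.mem_biUnion]
    exact h2 e
  have hcard : H.edgeFinset.card = Q.card * matchingNumber H := by
    rw [hEeq, Finset.card_biUnion (fun M hM N hN h => h3 M hM N hN h)]
    rw [Finset.sum_congr rfl (fun M hM => (h1 M hM).2), Finset.sum_const, smul_eq_mul]
  -- a proper coloring from the partition
  have hub : ∃ c : Sym2 W → ℕ, IsProperEdgeColoring H Q.card c := by
    refine ⟨fun e => if h : ∃ M ∈ Q, e ∈ M then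
      (Q.equivFin ⟨h.choose, h.choose_spec.1⟩ : Fin Q.card).val else 0, ?_, ?_⟩
    · intro e he
      have h : ∃ M ∈ Q, e ∈ M := (h2 e).mp (SimpleGraph.mem_edgeFinset.mpr he)
      beta_reduce
      rw [dif_pos h]
      exact (Q.equivFin ⟨h.choose, h.choose_spec.1⟩).isLt
    · intro e he f hf hef ⟨v, hv⟩ hcc
      have h : ∃ M ∈ Q, e ∈ M := (h2 e).mp (SimpleGraph.mem_edgeFinset.mpr he)
      have h' : ∃ M ∈ Q, f ∈ M := (h2 f).mp (SimpleGraph.mem_edgeFinset.mpr hf)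
      beta_reduce at hcc
      rw [dif_pos h, dif_pos h'] at hcc
      have : h.choose = h'.choose := by
        have := Q.equivFin.injective (Fin.val_injective hcc)
        exact Subtype.ext_iff.mp this
      exact (h1 h.choose h.choose_spec.1).1.2 e h.choose_spec.2 f
        (this ▸ h'.choose_spec.2) hef v hv
  have hle : chromaticIndex H ≤ Q.card := Nat.sInf_le hub
  -- lower bound by counting
  have hge : Q.card ≤ chromaticIndex H := by
    obtain ⟨c, hc⟩ := Nat.sInf_mem (⟨Q.card, hub⟩ :
      {n | ∃ c : Sym2 W → ℕ, IsProperEdgeColoring H n c}.Nonempty)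
    set n := chromaticIndex H with hn
    -- each color class is a matching
    have hclass : ∀ i : ℕ, (H.edgeFinset.filter (fun e => c e = i)).card ≤ matchingNumber H := by
      intro i
      apply matching_le (G := H)
      constructor
      · intro e he
        rw [Finset.mem_coe, Finset.mem_filter] at he
        exact SimpleGraph.mem_edgeFinset.mp he.1
      · intro e he f hf hef v hv
        rw [Finset.mem_filter] at he hf
        exact hc.2 e (SimpleGraph.mem_edgeFinset.mp he.1) f
          (SimpleGraph.mem_edgeFinset.mp hf.1) hef ⟨v, hv⟩ (he.2.trans hf.2.symm)
    have hsub : H.edgeFinset ⊆ (Finset.range n).biUnion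
        (fun i => H.edgeFinset.filter (fun e => c e = i)) := by
      intro e he
      refine Finset.mem_biUnion.mpr ⟨c e, Finset.mem_range.mpr ?_, Finset.mem_filter.mpr ⟨he, rfl⟩⟩
      exact hc.1 e (SimpleGraph.mem_edgeFinset.mp he)
    have : H.edgeFinset.card ≤ n * matchingNumber H := by
      calc H.edgeFinset.card ≤ ((Finset.range n).biUnion
              (fun i => H.edgeFinset.filter (fun e => c e = i))).card :=
            Finset.card_le_card hsub
        _ ≤ ∑ i ∈ Finset.range n, (H.edgeFinset.filter (fun e => c e = i)).card :=
            Finset.card_biUnion_le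
        _ ≤ ∑ _i ∈ Finset.range n, matchingNumber H :=
            Finset.sum_le_sum (fun i _ => hclass i)
        _ = n * matchingNumber H := by rw [Finset.sum_const, Finset.card_range, smul_eq_mul]
    rw [hcard] at this
    exact Nat.le_of_mul_le_mul_right this hν
  omega

end Aux2


theorem stmt_14 {V : Type*} [Fintype V] (G : SimpleGraph V) (hG : Friendly G)
    (x : V) (hx : matchingNumber (delVert G x) < matchingNumber G)
    (hE : (delVert G x).edgeFinset.Nonempty) :
    Friendly (delVert G x) ∧ chromaticIndex (delVert G x) = chromaticIndex G := by
  classical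
  obtain ⟨P, h1, h2, h3⟩ := hG
  have hν1 : 1 ≤ matchingNumber (delVert G x) := by
    obtain ⟨e, he⟩ := hE
    have hm : IsMatchingFinset (delVert G x) {e} := by
      constructor
      · intro f hf
        rw [Finset.mem_coe, Finset.mem_singleton] at hf
        subst hf
        exact SimpleGraph.mem_edgeFinset.mp he
      · intro a ha b hb hab
        rw [Finset.mem_singleton] at ha hb
        subst ha; subst hb
        exact absurd rfl hab
    simpa using matching_le hm
  have hνG : 1 ≤ matchingNumber G := by omega
  have key : ∀ M ∈ P, IsMatchingFinset (delVert G x) (down x M) ∧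
      (down x M).card = matchingNumber (delVert G x) := by
    intro M hM
    obtain ⟨hm, hc⟩ := h1 M hM
    exact ⟨down_matching hm, (down_max hm hc hx).1⟩
  set P' := P.image (down x) with hP'
  have h1' : ∀ M' ∈ P', IsMatchingFinset (delVert G x) M' ∧
      M'.card = matchingNumber (delVert G x) := by
    intro M' hM'
    obtain ⟨M, hM, rfl⟩ := Finset.mem_image.mp hM'
    exact key M hM
  have h2' : ∀ e, e ∈ (delVert G x).edgeFinset ↔ ∃ M' ∈ P', e ∈ M' := by
    intro e
    constructor
    · intro he
      have hp : push x e ∈ G.edgeFinset := SimpleGraph.mem_edgeFinset.mpr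
        ((push_mem_edgeSet x e).mpr (SimpleGraph.mem_edgeFinset.mp he))
      obtain ⟨M, hM, hem⟩ := (h2 _).mp hp
      exact ⟨down x M, Finset.mem_image_of_mem _ hM, mem_down.mpr hem⟩
    · rintro ⟨M', hM', heM'⟩
      obtain ⟨M, hM, rfl⟩ := Finset.mem_image.mp hM'
      exact SimpleGraph.mem_edgeFinset.mpr ((key M hM).1.1 heM')
  have h3' : ∀ M' ∈ P', ∀ N' ∈ P', M' ≠ N' → Disjoint M' N' := by
    intro M' hM' N' hN' hne
    obtain ⟨M, hM, rfl⟩ := Finset.mem_image.mp hM'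
    obtain ⟨N, hN, rfl⟩ := Finset.mem_image.mp hN'
    by_cases hMN : M = N
    · exact absurd (by rw [hMN]) hne
    · rw [Finset.disjoint_left]
      intro e he heN
      exact Finset.disjoint_left.mp (h3 M hM N hN hMN) (mem_down.mp he) (mem_down.mp heN)
  have hcardP : P'.card = P.card := by
    apply Finset.card_image_of_injOn
    intro M hM N hN h
    by_contra hne
    have hd := h3 M hM N hN hne
    have hnonempty : (down x M).Nonempty := by
      apply Finset.card_pos.mp
      rw [(key M hM).2]
      omega
    obtain ⟨e, he⟩ := hnonempty
    have heN : e ∈ down x N := h ▸ he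
    exact Finset.disjoint_left.mp hd (mem_down.mp he) (mem_down.mp heN)
  refine ⟨⟨P', h1', h2', h3'⟩, ?_⟩
  rw [chi_eq (delVert G x) P' h1' h2' h3' hν1, chi_eq G P h1 h2 h3 hνG, hcardP]
end
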